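/- arXiv:2110.08627 — 3 statements merged into one kernel-verified Lean document; each statement's English description precedes it below -/
import Mathlib

section
/- Let ρ ∈ (0,1), a, c > 0 and b ≥ 0 with 1.4·a·c/ρ + b ≥ e. If τ > 0 satisfies τ ≤ c · log(log(a·τ + b)/ρ), then τ ≤ c · log((1.4/ρ) · log(1.4·a·c/ρ + b)). -/
set_option maxHeartbeats 1000000


/-- Inversion of an iterated-logarithm implicit bound: if
`τ ≤ c · log(log(aτ + b)/ρ)` then `τ ≤ c · log((1.4/ρ) · log(1.4ac/ρ + b))`. -/
theorem stmt3 (ρ a c b τ : ℝ) (hρ : ρ ∈ Set.Ioo (0 : ℝ) 1) (ha : 0 < a) (hc : 0 < c)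
    (hb : 0 ≤ b) (hcond : Real.exp 1 ≤ 1.4 * a * c / ρ + b)
    (hτ : 0 < τ) (hdef : 1 < a * τ + b)
    (h : τ ≤ c * Real.log (Real.log (a * τ + b) / ρ)) :
    τ ≤ c * Real.log ((1.4 / ρ) * Real.log (1.4 * a * c / ρ + b)) := by
  obtain ⟨hρ0, hρ1⟩ := hρ
  set N : ℝ := 1.4 * a * c / ρ + b with hNdef
  clear_value N
  have hK : 0 < a * c / ρ := by positivity
  have hE : (0:ℝ) < Real.exp 1 := Real.exp_pos 1
  have he : (2.7 : ℝ) < Real.exp 1 := by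
    have := Real.exp_one_gt_d9; linarith
  have hN0 : (0:ℝ) < N := lt_of_lt_of_le (by linarith) hcond
  set t := Real.log N with htdef
  clear_value t
  have ht1 : 1 ≤ t := by
    rw [htdef, ← Real.log_exp 1]
    exact Real.log_le_log (Real.exp_pos 1) hcond
  have ht0 : (0:ℝ) < t := by linarith
  have hx1 : (0:ℝ) < a * τ + b := by linarith
  set L := Real.log (a * τ + b) with hLdef
  clear_value L
  have hL0 : 0 < L := hLdef ▸ Real.log_pos hdef
  -- main claim : L ≤ 1.4 t
  have key : L ≤ 1.4 * t := by
    by_cases hcase : a * τ + b ≤ N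
    · have : L ≤ t := by rw [hLdef, htdef]; exact Real.log_le_log hx1 hcase
      linarith
    · push_neg at hcase
      -- log y ≤ y / e
      have hloge : Real.log (L / ρ) ≤ L / ρ / Real.exp 1 := by
        have h1 := Real.add_one_le_exp (Real.log (L / ρ) - 1)
        have h2 : Real.exp (Real.log (L / ρ) - 1) = (L / ρ) / Real.exp 1 := by
          rw [Real.exp_sub, Real.exp_log (by positivity)]
        linarith [h1, h2.le, h2.ge]
      have hτ2 : τ ≤ c * (L / ρ / Real.exp 1) :=
        h.trans (by nlinarith [hloge])
      -- so x ≤ (K/e) L + b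
      have hxle : a * τ + b ≤ (a * c / ρ) / Real.exp 1 * L + b := by
        have h1 : a * τ ≤ a * (c * (L / ρ / Real.exp 1)) :=
          mul_le_mul_of_nonneg_left hτ2 ha.le
        have heq : a * (c * (L / ρ / Real.exp 1)) = (a * c / ρ) / Real.exp 1 * L := by
          field_simp
        linarith [heq ▸ h1]
      by_contra hcon
      push_neg at hcon
      set s := Real.exp (1.4 * t) with hsdef
      clear_value s
      have hsN : s = N * Real.exp (0.4 * t) := by
        rw [hsdef, show (1.4 : ℝ) * t = t + 0.4 * t by ring, Real.exp_add,
          htdef, Real.exp_log hN0]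
      have hexp04 : 1 + 0.4 * t ≤ Real.exp (0.4 * t) := by
        linarith [Real.add_one_le_exp (0.4 * t)]
      have hsN' : N * (1 + 0.4 * t) ≤ s := by
        rw [hsN]
        exact mul_le_mul_of_nonneg_left hexp04 hN0.le
      have hbN : 1.4 * (a * c / ρ) + b = N := by
        rw [hNdef]; ring_nf
      have h14K : 1.4 * (a * c / ρ) ≤ N := by linarith
      -- key2 : (K/e) * (1.4 t) + b < s
      have e2 : 1.4 * (a * c / ρ) * t / Real.exp 1 ≤ N * t / Real.exp 1 := by
        rw [div_le_div_iff₀ hE hE]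
        nlinarith [mul_le_mul_of_nonneg_right
          (mul_le_mul_of_nonneg_right h14K ht0.le) hE.le]
      have e3 : N * t / Real.exp 1 < 0.4 * (N * t) := by
        rw [div_lt_iff₀ hE]
        nlinarith [mul_pos hN0 ht0]
      have hbltN : b < N := by linarith
      have e4 : b + 0.4 * (N * t) < s := by nlinarith [hsN', hbltN]
      have hkey2 : (a * c / ρ) / Real.exp 1 * (1.4 * t) + b < s := by
        have e1 : (a * c / ρ) / Real.exp 1 * (1.4 * t)
            = 1.4 * (a * c / ρ) * t / Real.exp 1 := by ring
        linarith [e1.le, e1.ge]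
      -- x > s
      have hxs : s < a * τ + b := by
        have h5 := Real.exp_lt_exp.mpr hcon
        rw [hLdef, Real.exp_log hx1] at h5
        rw [hsdef]
        exact h5
      have hs0 : 0 < s := hsdef ▸ Real.exp_pos _
      have hlogs : Real.log s = 1.4 * t := by rw [hsdef, Real.log_exp]
      have hsK : (a * c / ρ) / Real.exp 1 ≤ s := by
        have h1 : (a * c / ρ) / Real.exp 1 ≤ a * c / ρ := by
          rw [div_le_iff₀ hE]
          nlinarith
        nlinarith [hsN', mul_pos hN0 ht0]
      -- monotonicity
      have hlogdiff : L - 1.4 * t ≤ (a * τ + b - s) / s := by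
        have h1 : L - 1.4 * t = Real.log ((a * τ + b) / s) := by
          rw [Real.log_div hx1.ne' hs0.ne', hlogs, hLdef]
        have h2 : Real.log ((a * τ + b) / s) ≤ (a * τ + b) / s - 1 :=
          Real.log_le_sub_one_of_pos (by positivity)
        have h3 : (a * τ + b) / s - 1 = (a * τ + b - s) / s := by
          field_simp
        linarith [h1 ▸ (h2.trans h3.le)]
      have hmono : (a * c / ρ) / Real.exp 1 * (L - 1.4 * t) ≤ a * τ + b - s := by
        have h1 : (a * c / ρ) / Real.exp 1 * (L - 1.4 * t) ≤
            s * ((a * τ + b - s) / s) :=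
          mul_le_mul hsK hlogdiff (by linarith) hs0.le
        have h2 : s * ((a * τ + b - s) / s) = a * τ + b - s := by
          field_simp
        linarith
      nlinarith [hxle, hkey2, hmono]
  -- finish
  have hfin : Real.log (L / ρ) ≤ Real.log (1.4 / ρ * t) := by
    apply Real.log_le_log (by positivity)
    rw [show (1.4 : ℝ) / ρ * t = 1.4 * t / ρ by ring]
    gcongr
  calc τ ≤ c * Real.log (L / ρ) := h
    _ ≤ c * Real.log (1.4 / ρ * t) := mul_le_mul_of_nonneg_left hfin hc.le
end

section
/- Let P and Q be two probability measures on the same measurable space. For every measurable set A with complement Aᶜ, P(A) + Q(Aᶜ) ≥ (1/2) · exp(−KL(P ‖ Q)). -/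
/-! With `f = dP/dQ`, the Bhattacharyya coefficient `H = ∫ √f dQ` separates the two sides.
Writing `√f = √(min f 1) · √(max f 1)`, Cauchy–Schwarz gives
`H² ≤ (∫ min(f, 1) dQ) (∫ max(f, 1) dQ) ≤ 2 ∫ min(f, 1) dQ ≤ 2 (P A + Q Aᶜ)`,
since the two integrals add up to `∫ f dQ + 1 ≤ 2`. On the other hand `H = ∫ f^(-1/2) dP`,
so Jensen's inequality for `exp` gives `exp(-KL/2) ≤ H`. -/

open MeasureTheory Classical

/-- KL divergence with values in `EReal`: `∫ log(dP/dQ) dP` when `P ≪ Q` and the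
integrand is integrable, and `+∞` otherwise. -/
noncomputable def klDivE {Ω : Type*} [MeasurableSpace Ω] (P Q : Measure Ω) : EReal :=
  if P ≪ Q ∧ Integrable (fun x => Real.log (P.rnDeriv Q x).toReal) P then
    ((∫ x, Real.log (P.rnDeriv Q x).toReal ∂P : ℝ) : EReal)
  else ⊤

/-- `exp(−x)` for `x : EReal`, with `exp(−∞) = 0` (and junk value `0` at `x = ⊥`). -/
noncomputable def expNeg (x : EReal) : ℝ :=
  if x = ⊤ ∨ x = ⊥ then 0 else Real.exp (-x.toReal)

open scoped ENNReal

lemma expNeg_top : expNeg ⊤ = 0 := by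
  simp [expNeg]

lemma expNeg_coe (x : ℝ) : expNeg x = Real.exp (-x) := by
  simp [expNeg]

section Lintegral

variable {α : Type*} [MeasurableSpace α] {μ : Measure α} {f g : α → ℝ≥0∞}

lemma lintegral_min_add_lintegral_max (hf : AEMeasurable f μ) (hg : AEMeasurable g μ) :
    ∫⁻ x, min (f x) (g x) ∂μ + ∫⁻ x, max (f x) (g x) ∂μ = ∫⁻ x, f x ∂μ + ∫⁻ x, g x ∂μ := by
  simp only [← lintegral_add_left' hf, ← lintegral_add_left' (hf.min hg), min_add_max]

lemma sq_lintegral_rpow_half_mul_le_min_mul_max (hf : AEMeasurable f μ) (hg : AEMeasurable g μ) :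
    (∫⁻ x, (f x * g x) ^ (1 / 2 : ℝ) ∂μ) ^ 2 ≤
      (∫⁻ x, min (f x) (g x) ∂μ) * ∫⁻ x, max (f x) (g x) ∂μ := by
  have hsplit : ∀ x, (f x * g x) ^ (1 / 2 : ℝ) =
      (min (f x) (g x)) ^ (1 / 2 : ℝ) * (max (f x) (g x)) ^ (1 / 2 : ℝ) := fun x => by
    rw [← ENNReal.mul_rpow_of_nonneg _ _ (by norm_num), min_mul_max]
  have hsq : ∀ a : ℝ≥0∞, (a ^ (1 / 2 : ℝ)) ^ (2 : ℝ) = a := fun a => by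
    rw [← ENNReal.rpow_mul]; norm_num
  have hCS := ENNReal.lintegral_mul_le_Lp_mul_Lq μ Real.HolderConjugate.two_two
    ((hf.min hg).pow_const (1 / 2 : ℝ)) ((hf.max hg).pow_const (1 / 2 : ℝ))
  simp only [Pi.mul_apply, ← hsplit, hsq] at hCS
  calc _ ≤ ((∫⁻ x, min (f x) (g x) ∂μ) ^ (1 / 2 : ℝ) *
        (∫⁻ x, max (f x) (g x) ∂μ) ^ (1 / 2 : ℝ)) ^ 2 := by
        gcongr
    _ = _ := by
        rw [mul_pow, ← ENNReal.rpow_natCast, ← ENNReal.rpow_natCast, ← ENNReal.rpow_mul,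
          ← ENNReal.rpow_mul]
        norm_num

end Lintegral

section RnDeriv

variable {Ω : Type*} [MeasurableSpace Ω] {P Q : Measure Ω}

lemma lintegral_min_rnDeriv_one_le {A : Set Ω} (hA : MeasurableSet A) :
    ∫⁻ x, min (P.rnDeriv Q x) 1 ∂Q ≤ P A + Q Aᶜ := by
  rw [← lintegral_add_compl _ hA]
  gcongr
  · exact (setLIntegral_mono' hA fun x _ => min_le_left _ _).trans
      (Measure.setLIntegral_rnDeriv_le A)
  · exact (setLIntegral_mono' hA.compl fun x _ => min_le_right _ _).trans_eq (by simp)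

lemma sq_lintegral_rnDeriv_rpow_half_le [IsProbabilityMeasure P] [IsProbabilityMeasure Q] :
    (∫⁻ x, P.rnDeriv Q x ^ (1 / 2 : ℝ) ∂Q) ^ 2 ≤ 2 * ∫⁻ x, min (P.rnDeriv Q x) 1 ∂Q := by
  have hf := (P.measurable_rnDeriv Q).aemeasurable (μ := Q)
  have hsum := lintegral_min_add_lintegral_max hf aemeasurable_const (g := fun _ => (1 : ℝ≥0∞))
  have hmax : ∫⁻ x, max (P.rnDeriv Q x) 1 ∂Q ≤ 2 := by
    refine le_add_self.trans (hsum.trans_le ?_)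
    simpa [one_add_one_eq_two] using
      add_le_add_left (Measure.lintegral_rnDeriv_le (μ := P) (ν := Q)) 1
  calc _ = (∫⁻ x, (P.rnDeriv Q x * 1) ^ (1 / 2 : ℝ) ∂Q) ^ 2 := by simp only [mul_one]
    _ ≤ _ := sq_lintegral_rpow_half_mul_le_min_mul_max hf aemeasurable_const
    _ ≤ _ := by rw [mul_comm]; gcongr

lemma lintegral_rnDeriv_rpow_sub_one [SigmaFinite P] [SigmaFinite Q] (hPQ : P ≪ Q) {s : ℝ}
    (hs : 0 < s) :
    ∫⁻ x, P.rnDeriv Q x ^ (s - 1) ∂P = ∫⁻ x, P.rnDeriv Q x ^ s ∂Q := by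
  rw [← lintegral_rnDeriv_mul hPQ ((P.measurable_rnDeriv Q).pow_const _).aemeasurable]
  refine lintegral_congr_ae ?_
  filter_upwards [Measure.rnDeriv_lt_top P Q] with x hx
  rcases eq_or_ne (P.rnDeriv Q x) 0 with h0 | h0
  · simp [h0, ENNReal.zero_rpow_of_pos hs]
  · conv_rhs => rw [← add_sub_cancel (1 : ℝ) s, ENNReal.rpow_add _ _ h0 hx.ne, ENNReal.rpow_one]

lemma exp_neg_half_integral_log_rnDeriv_le [IsProbabilityMeasure P] [SigmaFinite Q]
    (hPQ : P ≪ Q)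
    (hlog : Integrable (fun x => Real.log (P.rnDeriv Q x).toReal) P)
    (hH : ∫⁻ x, P.rnDeriv Q x ^ (1 / 2 : ℝ) ∂Q ≠ ∞) :
    Real.exp (-(∫ x, Real.log (P.rnDeriv Q x).toReal ∂P) / 2) ≤
      (∫⁻ x, P.rnDeriv Q x ^ (1 / 2 : ℝ) ∂Q).toReal := by
  have hg : AEMeasurable (fun x => P.rnDeriv Q x ^ (-(1 / 2) : ℝ)) P :=
    ((Measure.measurable_rnDeriv P Q).pow_const _).aemeasurable
  have hchange :
      ∫⁻ x, P.rnDeriv Q x ^ (-(1 / 2) : ℝ) ∂P = ∫⁻ x, P.rnDeriv Q x ^ (1 / 2 : ℝ) ∂Q := by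
    rw [← lintegral_rnDeriv_rpow_sub_one hPQ (by norm_num : (0 : ℝ) < 1 / 2)]
    norm_num
  have hexp : ∀ᵐ x ∂P, Real.exp (-(1 / 2) * Real.log (P.rnDeriv Q x).toReal) =
      (P.rnDeriv Q x ^ (-(1 / 2) : ℝ)).toReal := by
    filter_upwards [Measure.rnDeriv_pos hPQ, hPQ.ae_le (Measure.rnDeriv_lt_top P Q)] with x h0 htop
    rw [← ENNReal.toReal_rpow, Real.rpow_def_of_pos (ENNReal.toReal_pos h0.ne' htop.ne), mul_comm]
  have hint : Integrable (fun x => (P.rnDeriv Q x ^ (-(1 / 2) : ℝ)).toReal) P :=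
    integrable_toReal_of_lintegral_ne_top hg (hchange ▸ hH)
  calc Real.exp (-(∫ x, Real.log (P.rnDeriv Q x).toReal ∂P) / 2)
      = Real.exp (∫ x, -(1 / 2) * Real.log (P.rnDeriv Q x).toReal ∂P) := by
        rw [integral_const_mul]; ring_nf
    _ ≤ ∫ x, Real.exp (-(1 / 2) * Real.log (P.rnDeriv Q x).toReal) ∂P :=
        convexOn_exp.map_integral_le Real.continuous_exp.continuousOn isClosed_univ (by simp)
          (hlog.const_mul _) (hint.congr (hexp.mono fun x hx => hx.symm))
    _ = (∫⁻ x, P.rnDeriv Q x ^ (1 / 2 : ℝ) ∂Q).toReal := by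
        rw [integral_congr_ae hexp, integral_toReal hg (ae_lt_top' hg (hchange ▸ hH)), hchange]

end RnDeriv

/-- Bretagnolle–Huber inequality: for probability measures `P, Q` and any measurable
set `A`, `P(A) + Q(Aᶜ) ≥ (1/2) · exp(−KL(P‖Q))`. -/
theorem stmt7 {Ω : Type*} [MeasurableSpace Ω] (P Q : Measure Ω)
    [IsProbabilityMeasure P] [IsProbabilityMeasure Q]
    (A : Set Ω) (hA : MeasurableSet A) :
    (1 / 2 : ℝ) * expNeg (klDivE P Q) ≤ (P A).toReal + (Q Aᶜ).toReal := by
  by_cases h : P ≪ Q ∧ Integrable (fun x => Real.log (P.rnDeriv Q x).toReal) P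
  swap
  · rw [klDivE, if_neg h, expNeg_top, mul_zero]
    positivity
  obtain ⟨hPQ, hlog⟩ := h
  rw [klDivE, if_pos ⟨hPQ, hlog⟩, expNeg_coe]
  set KL := ∫ x, Real.log (P.rnDeriv Q x).toReal ∂P
  set H := ∫⁻ x, P.rnDeriv Q x ^ (1 / 2 : ℝ) ∂Q
  have hHA : H ^ 2 ≤ 2 * (P A + Q Aᶜ) :=
    sq_lintegral_rnDeriv_rpow_half_le.trans (by gcongr; exact lintegral_min_rnDeriv_one_le hA)
  have hH : H ≠ ∞ :=
    (ENNReal.pow_ne_top_iff.mp (hHA.trans_lt (by finiteness)).ne).resolve_right two_ne_zero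
  calc (1 / 2 : ℝ) * Real.exp (-KL)
      = (1 / 2) * Real.exp (-KL / 2) ^ 2 := by rw [← Real.exp_nat_mul]; ring_nf
    _ ≤ (1 / 2) * H.toReal ^ 2 := by
        gcongr
        exact exp_neg_half_integral_log_rnDeriv_le hPQ hlog hH
    _ ≤ (1 / 2) * (2 * (P A + Q Aᶜ)).toReal := by
        rw [← ENNReal.toReal_pow]
        gcongr
        finiteness
    _ = (P A).toReal + (Q Aᶜ).toReal := by
        rw [ENNReal.toReal_mul, ENNReal.toReal_ofNat,
          ENNReal.toReal_add (by finiteness) (by finiteness)]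
        ring
end

section
/- Let P and Q be probability distributions on a finite set 𝒜 with the same support, let δ(P,Q) = (1/2) Σ_{x∈𝒜} |P(x) − Q(x)| be the total variation distance, and α_Q = min{Q(x) : Q(x) > 0}. Then δ(P,Q)² ≤ (1/2)·KL(P ‖ Q) ≤ (1/α_Q)·δ(P,Q)². -/
/-!
Pinsker's inequality follows from the pointwise bound
`(a - b)² / (a + 2b) ≤ (2/3) (a log (a/b) - a + b)`, a one-variable calculus fact in `t = a/b`,
combined with the Cauchy–Schwarz (Sedrakyan) inequality for the weights `P + 2Q`, which sum to `3`.
The reverse inequality comes from `log u ≤ u - 1`, which bounds `KL(P‖Q)` by the χ²-divergence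
`Σ (P - Q)² / Q ≤ Σ (P - Q)² / α_Q`, and from `Σ (P - Q)² ≤ (Σ |P - Q|)² / 2`, which holds because
`Σ (P - Q) = 0` forces every `|P x - Q x|` to be at most half of `Σ |P - Q|`.
-/

open Finset Real Set

theorem le_of_hasDerivAt_of_nonpos_of_nonneg {f f' : ℝ → ℝ} {a c t : ℝ}
    (hf : ContinuousOn f (Ici a)) (hderiv : ∀ x, a < x → HasDerivAt f (f' x) x)
    (hle : ∀ x ∈ Ioo a c, f' x ≤ 0) (hge : ∀ x, c < x → 0 ≤ f' x)
    (hac : a ≤ c) (ht : a ≤ t) : f c ≤ f t := by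
  rcases le_total t c with htc | hct
  · refine antitoneOn_of_hasDerivWithinAt_nonpos (f' := f') (convex_Icc a c)
      (hf.mono Icc_subset_Ici_self) (fun x hx => ?_) (fun x hx => ?_) ⟨ht, htc⟩ ⟨hac, le_rfl⟩ htc
    · rw [interior_Icc] at hx
      exact (hderiv x hx.1).hasDerivWithinAt
    · rw [interior_Icc] at hx
      exact hle x hx
  · refine monotoneOn_of_hasDerivWithinAt_nonneg (f' := f') (convex_Ici c)
      (hf.mono (Ici_subset_Ici.2 hac)) (fun x hx => ?_) (fun x hx => ?_) self_mem_Ici hct hct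
    · rw [interior_Ici] at hx
      exact (hderiv x (hac.trans_lt hx)).hasDerivWithinAt
    · rw [interior_Ici] at hx
      exact hge x hx

theorem two_mul_sub_one_le_add_one_mul_log {t : ℝ} (ht : 1 ≤ t) :
    2 * (t - 1) ≤ (t + 1) * log t := by
  have hx0 : 0 ≤ (t - 1) / (t + 1) := div_nonneg (by linarith) (by linarith)
  have hx1 : (t - 1) / (t + 1) < 1 := (div_lt_one (by linarith)).2 (by linarith)
  -- `log t = log ((1 + x) / (1 - x)) ≥ 2 x` for `x = (t - 1) / (t + 1)`
  have h := sum_range_le_log_div hx0 hx1 1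
  have ht' : (1 + (t - 1) / (t + 1)) / (1 - (t - 1) / (t + 1)) = t := by
    field_simp
    ring
  rw [ht'] at h
  simp only [range_one, sum_singleton, mul_zero, zero_add, pow_one, Nat.cast_zero, div_one] at h
  rw [div_le_iff₀ (by linarith)] at h
  linarith

theorem add_one_mul_log_le_two_mul_sub_one {t : ℝ} (ht0 : 0 < t) (ht1 : t ≤ 1) :
    (t + 1) * log t ≤ 2 * (t - 1) := by
  have h := two_mul_sub_one_le_add_one_mul_log (one_le_inv_iff₀.2 ⟨ht0, ht1⟩)
  rw [log_inv] at h
  have := mul_le_mul_of_nonneg_left h ht0.le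
  field_simp at this
  linarith

theorem three_mul_sq_sub_one_le {t : ℝ} (ht : 0 ≤ t) :
    3 * (t - 1) ^ 2 ≤ 2 * (t + 2) * (t * log t - t + 1) := by
  let h : ℝ → ℝ := fun t => 2 * (t + 2) * (t * log t - t + 1) - 3 * (t - 1) ^ 2
  have hderiv : ∀ t, 0 < t → HasDerivAt h (4 * ((t + 1) * log t - 2 * (t - 1))) t := by
    intro t ht
    have := (((hasDerivAt_id' t).add_const 2).const_mul 2).fun_mul
      (((hasDerivAt_mul_log ht.ne').fun_sub (hasDerivAt_id' t)).add_const 1)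
      |>.fun_sub ((((hasDerivAt_id' t).sub_const 1).fun_pow 2).const_mul 3)
    refine this.congr_deriv ?_
    norm_num
    ring
  have hcont : ContinuousOn h (Ici 0) := by
    have := continuous_mul_log
    fun_prop
  have := le_of_hasDerivAt_of_nonpos_of_nonneg hcont hderiv
    (fun x hx => by nlinarith [add_one_mul_log_le_two_mul_sub_one hx.1 hx.2.le])
    (fun x hx => by nlinarith [two_mul_sub_one_le_add_one_mul_log hx.le]) zero_le_one ht
  simpa [h] using this

theorem sq_sub_div_add_two_mul_le {a b : ℝ} (ha : 0 ≤ a) (hb : 0 < b) :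
    (a - b) ^ 2 / (a + 2 * b) ≤ 2 / 3 * (a * log (a / b) - a + b) := by
  have key := three_mul_sq_sub_one_le (div_nonneg ha hb.le)
  have hab : a = b * (a / b) := by field_simp
  rw [div_le_iff₀ (by linarith)]
  set t := a / b
  calc (a - b) ^ 2 = b ^ 2 / 3 * (3 * (t - 1) ^ 2) := by rw [hab]; ring
    _ ≤ b ^ 2 / 3 * (2 * (t + 2) * (t * log t - t + 1)) := by gcongr
    _ = 2 / 3 * (a * log t - a + b) * (a + 2 * b) := by rw [hab]; ring

theorem mul_log_div_le_sq_sub_div_add_sub {a b : ℝ} (ha : 0 ≤ a) (hb : 0 ≤ b) :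
    a * log (a / b) ≤ (a - b) ^ 2 / b + a - b := by
  obtain rfl | hb := hb.eq_or_lt
  · -- junk values: `a / 0 = 0` and `log 0 = 0`
    simpa using ha
  obtain rfl | ha := ha.eq_or_lt
  · simp [sq, hb.ne']
  calc a * log (a / b) ≤ a * (a / b - 1) :=
        mul_le_mul_of_nonneg_left (log_le_sub_one_of_pos (div_pos ha hb)) ha.le
    _ = (a - b) ^ 2 / b + a - b := by field_simp; ring

section

variable {ι : Type*} (s : Finset ι)

theorem two_mul_abs_le_sum_abs_of_sum_eq_zero {d : ι → ℝ} (hd : ∑ i ∈ s, d i = 0) {j : ι}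
    (hj : j ∈ s) : 2 * |d j| ≤ ∑ i ∈ s, |d i| := by
  classical
  have hrest : d j = -∑ i ∈ s.erase j, d i := by
    rw [← add_sum_erase s d hj] at hd
    linarith
  calc 2 * |d j| = |d j| + |∑ i ∈ s.erase j, d i| := by rw [hrest, abs_neg]; ring
    _ ≤ |d j| + ∑ i ∈ s.erase j, |d i| := by gcongr; exact abs_sum_le_sum_abs _ _
    _ = ∑ i ∈ s, |d i| := add_sum_erase s (fun i => |d i|) hj

theorem sum_sq_le_sq_sum_abs_div_two {d : ι → ℝ} (hd : ∑ i ∈ s, d i = 0) :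
    ∑ i ∈ s, d i ^ 2 ≤ (∑ i ∈ s, |d i|) ^ 2 / 2 := by
  calc ∑ i ∈ s, d i ^ 2 = ∑ i ∈ s, |d i| * |d i| := by simp only [abs_mul_abs_self, sq]
    _ ≤ ∑ i ∈ s, (∑ k ∈ s, |d k|) / 2 * |d i| := by
        gcongr with i hi
        linarith [two_mul_abs_le_sum_abs_of_sum_eq_zero s hd hi]
    _ = (∑ i ∈ s, |d i|) ^ 2 / 2 := by rw [← mul_sum]; ring

variable {P Q : ι → ℝ}

theorem sq_sum_abs_sub_le_two_mul_sum_mul_log_div (hP0 : ∀ x ∈ s, 0 ≤ P x)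
    (hQ0 : ∀ x ∈ s, 0 ≤ Q x) (hP1 : ∑ x ∈ s, P x = 1) (hQ1 : ∑ x ∈ s, Q x = 1)
    (hac : ∀ x ∈ s, Q x = 0 → P x = 0) :
    (∑ x ∈ s, |P x - Q x|) ^ 2 ≤ 2 * ∑ x ∈ s, P x * log (P x / Q x) := by
  set T := s.filter (0 < Q ·)
  have sum_T : ∀ f : ι → ℝ, (∀ x ∈ s, Q x = 0 → f x = 0) → ∑ x ∈ T, f x = ∑ x ∈ s, f x :=
    fun f hf => sum_filter_of_ne fun x hx hfx =>
      (hQ0 x hx).lt_of_ne fun hQ => hfx (hf x hx hQ.symm)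
  have hweight : ∑ x ∈ T, (P x + 2 * Q x) = 3 := by
    rw [sum_T _ fun x hx hQ => by simp [hQ, hac x hx hQ], sum_add_distrib, ← mul_sum, hP1, hQ1]
    norm_num
  have hpos : ∀ x ∈ T, 0 < P x + 2 * Q x := fun x hx => by
    rw [mem_filter] at hx
    linarith [hP0 x hx.1, hx.2]
  calc (∑ x ∈ s, |P x - Q x|) ^ 2
      = 3 * ((∑ x ∈ T, |P x - Q x|) ^ 2 / ∑ x ∈ T, (P x + 2 * Q x)) := by
        rw [hweight, sum_T _ fun x hx hQ => by simp [hQ, hac x hx hQ]]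
        ring
    _ ≤ 3 * ∑ x ∈ T, |P x - Q x| ^ 2 / (P x + 2 * Q x) := by
        gcongr
        exact sq_sum_div_le_sum_sq_div T _ hpos
    _ ≤ 3 * ∑ x ∈ T, 2 / 3 * (P x * log (P x / Q x) - P x + Q x) := by
        gcongr with x hx
        rw [sq_abs]
        exact sq_sub_div_add_two_mul_le (hP0 x (mem_filter.1 hx).1) (mem_filter.1 hx).2
    _ = 2 * ∑ x ∈ s, P x * log (P x / Q x) := by
        rw [sum_T _ fun x hx hQ => by simp [hQ, hac x hx hQ], ← mul_sum, sum_add_distrib,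
          sum_sub_distrib, hP1, hQ1]
        ring

theorem sum_mul_log_div_le_sum_sq_sub_div (hP0 : ∀ x ∈ s, 0 ≤ P x) (hQ0 : ∀ x ∈ s, 0 ≤ Q x)
    (hPQ : ∑ x ∈ s, P x = ∑ x ∈ s, Q x) :
    ∑ x ∈ s, P x * log (P x / Q x) ≤ ∑ x ∈ s, (P x - Q x) ^ 2 / Q x := by
  calc ∑ x ∈ s, P x * log (P x / Q x) ≤ ∑ x ∈ s, ((P x - Q x) ^ 2 / Q x + P x - Q x) :=
        sum_le_sum fun x hx => mul_log_div_le_sq_sub_div_add_sub (hP0 x hx) (hQ0 x hx)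
    _ = ∑ x ∈ s, (P x - Q x) ^ 2 / Q x := by
        rw [sum_sub_distrib, sum_add_distrib, hPQ]
        ring

theorem sum_mul_log_div_le_sq_sum_abs_sub_div (hP0 : ∀ x ∈ s, 0 ≤ P x)
    (hQ0 : ∀ x ∈ s, 0 ≤ Q x) (hPQ : ∑ x ∈ s, P x = ∑ x ∈ s, Q x) {α : ℝ} (hα : 0 < α)
    (hαle : ∀ x ∈ s, 0 < Q x → α ≤ Q x) :
    ∑ x ∈ s, P x * log (P x / Q x) ≤ (∑ x ∈ s, |P x - Q x|) ^ 2 / (2 * α) := by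
  have hd : ∑ x ∈ s, (P x - Q x) = 0 := by rw [sum_sub_distrib, hPQ, sub_self]
  calc ∑ x ∈ s, P x * log (P x / Q x) ≤ ∑ x ∈ s, (P x - Q x) ^ 2 / Q x :=
        sum_mul_log_div_le_sum_sq_sub_div s hP0 hQ0 hPQ
    _ ≤ ∑ x ∈ s, (P x - Q x) ^ 2 / α := by
        refine sum_le_sum fun x hx => ?_
        rcases lt_or_ge 0 (Q x) with hQ | hQ
        · exact div_le_div_of_nonneg_left (sq_nonneg _) hα (hαle x hx hQ)
        · exact (div_nonpos_of_nonneg_of_nonpos (sq_nonneg _) hQ).trans (by positivity)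
    _ = (∑ x ∈ s, (P x - Q x) ^ 2) / α := by rw [sum_div]
    _ ≤ (∑ x ∈ s, |P x - Q x|) ^ 2 / 2 / α := by
        gcongr
        exact sum_sq_le_sq_sum_abs_div_two s hd
    _ = (∑ x ∈ s, |P x - Q x|) ^ 2 / (2 * α) := by rw [div_div]

end

/-- Pinsker and reverse Pinsker on a finite space: for probability mass functions `P, Q`
on a finite type with the same support, with `δ = (1/2)Σ|P x − Q x|` and
`α_Q = min{Q x : Q x > 0}`, we have `δ² ≤ (1/2)·KL(P‖Q) ≤ (1/α_Q)·δ²`. -/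
theorem stmt8 {𝒜 : Type*} [Fintype 𝒜] (P Q : 𝒜 → ℝ)
    (hP0 : ∀ x, 0 ≤ P x) (hQ0 : ∀ x, 0 ≤ Q x)
    (hP1 : ∑ x, P x = 1) (hQ1 : ∑ x, Q x = 1)
    (hsupp : ∀ x, P x = 0 ↔ Q x = 0)
    (αQ : ℝ) (hαle : ∀ x, 0 < Q x → αQ ≤ Q x) (hαmem : ∃ x, 0 < Q x ∧ Q x = αQ) :
    ((1 / 2) * ∑ x, |P x - Q x|) ^ 2 ≤ (1 / 2) * ∑ x, P x * Real.log (P x / Q x) ∧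
      (1 / 2) * ∑ x, P x * Real.log (P x / Q x)
        ≤ (1 / αQ) * ((1 / 2) * ∑ x, |P x - Q x|) ^ 2 := by
  have hα : 0 < αQ := by
    obtain ⟨x, hx, rfl⟩ := hαmem
    exact hx
  have pinsker := sq_sum_abs_sub_le_two_mul_sum_mul_log_div univ (fun x _ => hP0 x)
    (fun x _ => hQ0 x) hP1 hQ1 fun x _ => (hsupp x).2
  have reverse := sum_mul_log_div_le_sq_sum_abs_sub_div univ (fun x _ => hP0 x)
    (fun x _ => hQ0 x) (hP1.trans hQ1.symm) hα fun x _ => hαle x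
  constructor
  · linarith
  · calc (1 / 2) * ∑ x, P x * log (P x / Q x)
        ≤ (1 / 2) * ((∑ x, |P x - Q x|) ^ 2 / (2 * αQ)) := by gcongr
      _ = (1 / αQ) * ((1 / 2) * ∑ x, |P x - Q x|) ^ 2 := by field_simp
end
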